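/- arXiv:1711.00172 — 2 statements merged into one kernel-verified Lean document; each statement's English description precedes it below -/
import Mathlib

section
/- Let T_l = { u·4^l + Σ_{i=0}^{l-1} v_i·4^i : u ∈ {1,2,3,4}, v_i ∈ {1,2} } and A = ⋃_{l≥0} T_l. Then for every m ∈ A, the number of elements of A that are at most m is strictly less than 4·√m. -/
/-- `T l` is the set of integers `u·4^l + ∑_{i<l} v_i·4^i` with `u ∈ {1,2,3,4}`
and `v_i ∈ {1,2}` for `0 ≤ i ≤ l-1`. -/
def T (l : ℕ) : Set ℕ :=
  {n | ∃ u : ℕ, (1 ≤ u ∧ u ≤ 4) ∧ ∃ v : ℕ → ℕ, (∀ i, i < l → v i = 1 ∨ v i = 2) ∧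
    n = u * 4 ^ l + ∑ i ∈ Finset.range l, v i * 4 ^ i}

/-- `A = ⋃_{l ≥ 0} T_l`. -/
def A : Set ℕ := ⋃ l : ℕ, T l

/-- The counting function of a set `S` of nonnegative integers:
the number of elements of `S` that are at most `n`. -/
noncomputable def cnt (S : Set ℕ) (n : ℕ) : ℕ := (S ∩ Set.Iic n).ncard

/-- `S` is an `AP₃`-covering sequence if there is `n₀` such that every `n > n₀`
is the last term of a 3-term arithmetic progression whose first two terms lie in `S`. -/
def AP3Covering (S : Set ℕ) : Prop :=
  ∃ n₀ : ℕ, ∀ n : ℕ, n₀ < n → ∃ a ∈ S, ∃ b ∈ S, a < b ∧ b < n ∧ a + n = 2 * b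

/-! Since `u·4^(l+1) + ∑_{i ≤ l} v_i·4^i = 4·(u·4^l + ∑_{i < l} v_{i+1}·4^i) + v_0`, we have
`T_{l+1} ⊆ 4·T_l + {1, 2}`. Hence `A` lies in the image of `n ≥ 4` under the strictly increasing
map `g` with `g n = n - 3` for `n < 8` and `g n = 4·g ⌊n/2⌋ + 1 + (n mod 2)` beyond. So at most
`n - 3` elements of `A` are `≤ g n`, while `(n + 1)² ≤ 16·g n + 9` by induction on `n`. -/

/-- For `4·2^l ≤ n < 8·2^l`, `enumA n` is the element of `T l` with `u = ⌊n / 2^l⌋ - 3` and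
`v_i = 1 +` the `i`-th binary digit of `n`. -/
def enumA (n : ℕ) : ℕ :=
  if n < 8 then n - 3 else 4 * enumA (n / 2) + 1 + n % 2

lemma enumA_of_lt_eight {n : ℕ} (h : n < 8) : enumA n = n - 3 := by
  rw [enumA, if_pos h]

lemma enumA_of_eight_le {n : ℕ} (h : 8 ≤ n) : enumA n = 4 * enumA (n / 2) + 1 + n % 2 := by
  rw [enumA, if_neg (by omega)]

lemma enumA_lt_enumA_add_one {n : ℕ} (hn : 4 ≤ n) : enumA n < enumA (n + 1) := by
  induction n using Nat.strong_induction_on with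
  | _ n ih =>
    rcases lt_or_ge n 7 with h | h
    · rw [enumA_of_lt_eight (by omega), enumA_of_lt_eight (by omega)]
      omega
    rcases h.eq_or_lt with rfl | h
    · simp [enumA_of_lt_eight, enumA_of_eight_le]
    rw [enumA_of_eight_le (n := n) (by omega), enumA_of_eight_le (n := n + 1) (by omega)]
    rcases Nat.mod_two_eq_zero_or_one n with hr | hr
    · have hdiv : (n + 1) / 2 = n / 2 := by omega
      rw [hdiv]
      omega
    · have hdiv : (n + 1) / 2 = n / 2 + 1 := by omega
      have := ih (n / 2) (by omega) (by omega)
      rw [hdiv]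
      omega

lemma strictMonoOn_enumA : StrictMonoOn enumA (Set.Ici 4) :=
  strictMonoOn_of_lt_add_one Set.ordConnected_Ici fun _ _ hn _ => enumA_lt_enumA_add_one hn

lemma sq_add_one_le_enumA {n : ℕ} (hn : 4 ≤ n) : (n + 1) ^ 2 ≤ 16 * enumA n + 9 := by
  induction n using Nat.strong_induction_on with
  | _ n ih =>
    rcases lt_or_ge n 8 with h | h
    · rw [enumA_of_lt_eight h]
      interval_cases n <;> norm_num
    rw [enumA_of_eight_le h]
    have := ih (n / 2) (by omega) (by omega)
    rcases Nat.mod_two_eq_zero_or_one n with hr | hr <;>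
      nlinarith [Nat.div_add_mod n 2]

lemma exists_T_eq_four_mul_add {l x : ℕ} (hx : x ∈ T (l + 1)) :
    ∃ y ∈ T l, x = 4 * y + 1 ∨ x = 4 * y + 2 := by
  obtain ⟨u, hu, v, hv, rfl⟩ := hx
  refine ⟨u * 4 ^ l + ∑ i ∈ Finset.range l, v (i + 1) * 4 ^ i,
    ⟨u, hu, fun i => v (i + 1), fun i hi => hv (i + 1) (by omega), rfl⟩, ?_⟩
  have hsum : ∑ i ∈ Finset.range (l + 1), v i * 4 ^ i
      = 4 * ∑ i ∈ Finset.range l, v (i + 1) * 4 ^ i + v 0 := by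
    rw [Finset.sum_range_succ', Finset.mul_sum]
    simp only [pow_succ, pow_zero, mul_one]
    congr 1
    exact Finset.sum_congr rfl fun i _ => by ring
  rw [hsum]
  rcases hv 0 (by omega) with h | h
  · left; rw [h]; ring
  · right; rw [h]; ring

lemma T_subset_image_enumA (l : ℕ) : T l ⊆ enumA '' Set.Ici 4 := by
  induction l with
  | zero =>
    rintro x ⟨u, hu, v, -, rfl⟩
    exact ⟨u + 3, Set.mem_Ici.mpr (by omega), by rw [enumA_of_lt_eight (by omega)]; simp⟩
  | succ l ih =>
    intro x hx
    obtain ⟨y, hy, hxy⟩ := exists_T_eq_four_mul_add hx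
    obtain ⟨k, hk : 4 ≤ k, rfl⟩ := ih hy
    rcases hxy with rfl | rfl
    · refine ⟨2 * k, Set.mem_Ici.mpr (by omega), ?_⟩
      rw [enumA_of_eight_le (by omega)]
      simp
    · refine ⟨2 * k + 1, Set.mem_Ici.mpr (by omega), ?_⟩
      rw [enumA_of_eight_le (by omega)]
      have h1 : (2 * k + 1) / 2 = k := by omega
      rw [h1]
      omega

lemma A_subset_image_enumA : A ⊆ enumA '' Set.Ici 4 :=
  Set.iUnion_subset T_subset_image_enumA

lemma cnt_apply_le_of_subset_image {S : Set ℕ} {f : ℕ → ℕ} {a n : ℕ}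
    (hf : StrictMonoOn f (Set.Ici a)) (hS : S ⊆ f '' Set.Ici a) (hn : a ≤ n) :
    cnt S (f n) ≤ n + 1 - a := by
  have hsub : S ∩ Set.Iic (f n) ⊆ f '' Set.Icc a n := by
    rintro x ⟨hxS, hxn⟩
    obtain ⟨k, hk, rfl⟩ := hS hxS
    exact ⟨k, ⟨hk, (hf.le_iff_le hk hn).mp hxn⟩, rfl⟩
  calc cnt S (f n) ≤ (f '' Set.Icc a n).ncard :=
        Set.ncard_le_ncard hsub ((Set.finite_Icc a n).image f)
    _ ≤ (Set.Icc a n).ncard := Set.ncard_image_le (Set.finite_Icc a n)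
    _ = n + 1 - a := Set.ncard_Icc_nat a n

theorem stmt_5 (m : ℕ) (hm : m ∈ A) :
    (cnt A m : ℝ) < 4 * Real.sqrt m := by
  obtain ⟨n, hn : 4 ≤ n, rfl⟩ := A_subset_image_enumA hm
  have hcnt := cnt_apply_le_of_subset_image strictMonoOn_enumA A_subset_image_enumA hn
  have hsq := sq_add_one_le_enumA hn
  have hlt : cnt A (enumA n) ^ 2 < 16 * enumA n := by
    calc cnt A (enumA n) ^ 2 ≤ (n - 3) ^ 2 := Nat.pow_le_pow_left (by omega) 2
      _ < 16 * enumA n := by zify [show 3 ≤ n by omega] at hsq ⊢; nlinarith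
  have hlt' : (cnt A (enumA n) : ℝ) ^ 2 < (4 * Real.sqrt (enumA n)) ^ 2 := by
    rw [mul_pow, Real.sq_sqrt (Nat.cast_nonneg _)]
    exact_mod_cast hlt
  exact lt_of_pow_lt_pow_left₀ 2 (by positivity) hlt'
end

section
/- Let T_l = { u·4^l + Σ_{i=0}^{l-1} v_i·4^i : u ∈ {1,2,3,4}, v_i ∈ {1,2} } and A = ⋃_{l≥0} T_l. For each fixed u ∈ {1,2,3,4}, setting q_{u,l} = u·4^l + Σ_{i=0}^{l-1} 2·4^i, one has lim_{l→∞} A(q_{u,l})/√(q_{u,l}) = (u+4)/√(u + 2/3), where A(n) denotes the number of elements of A that are at most n. -/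
/-!
Reading base-4 digits from the bottom, `T (l + 1) = 4 • T l + {1, 2}` and `T 0 = {1, 2, 3, 4}`,
so `A = {1, 2, 3, 4} ∪ (4 • A + {1, 2})`. Since `q_{u,l+1} = 4 q_{u,l} + 2`, this gives
`A(q_{u,l+1}) = 2 A(q_{u,l}) + 4` with `A(q_{u,0}) = u`, hence `A(q_{u,l}) = (u + 4) 2^l - 4`,
while `q_{u,l} = (u + 2/3) 4^l - 2/3`.
-/

open Filter Topology Set

lemma mem_T_zero {n : ℕ} : n ∈ T 0 ↔ 1 ≤ n ∧ n ≤ 4 := by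
  simp [T]

lemma mem_T_succ {l n : ℕ} :
    n ∈ T (l + 1) ↔ ∃ m ∈ T l, ∃ v, (v = 1 ∨ v = 2) ∧ n = 4 * m + v := by
  constructor
  · rintro ⟨u, hu, v, hv, rfl⟩
    refine ⟨u * 4 ^ l + ∑ i ∈ Finset.range l, v (i + 1) * 4 ^ i,
      ⟨u, hu, fun i => v (i + 1), fun i hi => hv (i + 1) (by omega), rfl⟩,
      v 0, hv 0 (by omega), ?_⟩
    rw [Finset.sum_range_succ', mul_add, Finset.mul_sum]
    simp only [pow_succ]
    ring_nf
  · rintro ⟨_, ⟨u, hu, w, hw, rfl⟩, v, hv, rfl⟩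
    refine ⟨u, hu, fun i => if i = 0 then v else w (i - 1), fun i hi => ?_, ?_⟩
    · dsimp only
      split_ifs
      · exact hv
      · exact hw (i - 1) (by omega)
    · rw [Finset.sum_range_succ', mul_add, Finset.mul_sum]
      simp only [add_eq_zero, one_ne_zero, and_false, if_false, add_tsub_cancel_right,
        if_true, pow_zero, pow_succ]
      ring_nf

lemma one_le_of_mem_A {n : ℕ} (hn : n ∈ A) : 1 ≤ n := by
  obtain ⟨l, u, hu, v, -, rfl⟩ := mem_iUnion.1 hn
  have : 1 * 1 ≤ u * 4 ^ l := Nat.mul_le_mul hu.1 (Nat.one_le_pow _ _ (by norm_num))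
  omega

lemma mem_A_iff {n : ℕ} :
    n ∈ A ↔ (1 ≤ n ∧ n ≤ 4) ∨ ∃ m ∈ A, ∃ v, (v = 1 ∨ v = 2) ∧ n = 4 * m + v := by
  simp only [A, Set.mem_iUnion]
  constructor
  · rintro ⟨_ | l, hn⟩
    · exact .inl (mem_T_zero.1 hn)
    · obtain ⟨m, hm, hv⟩ := mem_T_succ.1 hn
      exact .inr ⟨m, ⟨l, hm⟩, hv⟩
  · rintro (hn | ⟨m, ⟨l, hm⟩, hv⟩)
    · exact ⟨0, mem_T_zero.2 hn⟩
    · exact ⟨l + 1, mem_T_succ.2 ⟨m, hm, hv⟩⟩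

lemma A_inter_Iic_of_le_four {u : ℕ} (hu : u ≤ 4) : A ∩ Iic u = Icc 1 u := by
  ext n
  rw [mem_inter_iff, mem_A_iff]
  simp only [mem_Iic, mem_Icc]
  constructor
  · rintro ⟨h | ⟨m, hm, v, -, rfl⟩, hn⟩
    · exact ⟨h.1, hn⟩
    · have := one_le_of_mem_A hm
      omega
  · rintro ⟨h1, h2⟩
    exact ⟨.inl ⟨h1, by omega⟩, h2⟩

lemma cnt_A_of_le_four {u : ℕ} (hu : u ≤ 4) : cnt A u = u := by
  rw [cnt, A_inter_Iic_of_le_four hu, ncard_Icc_nat]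
  omega

lemma A_inter_Iic_four_mul_add_two {q : ℕ} (hq : 1 ≤ q) :
    A ∩ Iic (4 * q + 2) =
      Icc 1 4 ∪ ((4 * · + 1) '' (A ∩ Iic q) ∪ (4 * · + 2) '' (A ∩ Iic q)) := by
  ext n
  simp only [mem_inter_iff, mem_Iic, mem_union, mem_Icc, mem_image]
  rw [mem_A_iff]
  constructor
  · rintro ⟨h | ⟨m, hm, v, hv | hv, rfl⟩, hn⟩
    · exact .inl h
    · exact .inr (.inl ⟨m, ⟨hm, by omega⟩, by omega⟩)
    · exact .inr (.inr ⟨m, ⟨hm, by omega⟩, by omega⟩)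
  · rintro (h | ⟨m, ⟨hm, hmq⟩, rfl⟩ | ⟨m, ⟨hm, hmq⟩, rfl⟩)
    · exact ⟨.inl h, by omega⟩
    · exact ⟨.inr ⟨m, hm, 1, .inl rfl, rfl⟩, by omega⟩
    · exact ⟨.inr ⟨m, hm, 2, .inr rfl, rfl⟩, by omega⟩

lemma cnt_A_four_mul_add_two {q : ℕ} (hq : 1 ≤ q) : cnt A (4 * q + 2) = 2 * cnt A q + 4 := by
  have hfin : (A ∩ Iic q).Finite := (finite_Iic q).inter_of_right A
  have hbig : Disjoint (Icc 1 4) ((4 * · + 1) '' (A ∩ Iic q) ∪ (4 * · + 2) '' (A ∩ Iic q)) := by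
    rw [disjoint_left]
    rintro n ⟨-, hn⟩ (⟨m, ⟨hm, -⟩, rfl⟩ | ⟨m, ⟨hm, -⟩, rfl⟩) <;>
    · have := one_le_of_mem_A hm
      simp only at hn
      omega
  have hodd : Disjoint ((4 * · + 1) '' (A ∩ Iic q)) ((4 * · + 2) '' (A ∩ Iic q)) := by
    rw [disjoint_left]
    rintro _ ⟨m, -, rfl⟩ ⟨m', -, h⟩
    simp only at h
    omega
  rw [cnt, A_inter_Iic_four_mul_add_two hq, ncard_union_eq hbig (toFinite _)
    ((hfin.image _).union (hfin.image _)), ncard_union_eq hodd (hfin.image _) (hfin.image _),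
    ncard_image_of_injective _ (fun a b h => by omega),
    ncard_image_of_injective _ (fun a b h => by omega), ncard_Icc_nat, cnt]
  omega

lemma tendsto_mul_pow_sub_div_pow {K c r : ℝ} (hr : 1 < r) :
    Tendsto (fun l : ℕ => (K * r ^ l - c) / r ^ l) atTop (𝓝 K) := by
  have hinv : Tendsto (fun l : ℕ => K - c * (r ^ l)⁻¹) atTop (𝓝 (K - c * 0)) :=
    tendsto_const_nhds.sub
      ((tendsto_inv_atTop_zero.comp (tendsto_pow_atTop_atTop_of_one_lt hr)).const_mul c)
  rw [mul_zero, sub_zero] at hinv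
  refine hinv.congr fun l => ?_
  rw [sub_div, mul_div_cancel_right₀ _ (by positivity), div_eq_mul_inv]

lemma tendsto_mul_two_pow_div_sqrt_mul_four_pow {K c K' c' : ℝ} (hK' : 0 < K') :
    Tendsto (fun l : ℕ => (K * 2 ^ l - c) / √(K' * 4 ^ l - c')) atTop (𝓝 (K / √K')) := by
  have hden := (tendsto_mul_pow_sub_div_pow (K := K') (c := c') (r := 4) (by norm_num)).sqrt
  refine ((tendsto_mul_pow_sub_div_pow (K := K) (c := c) (r := 2) (by norm_num)).div hden (by positivity)).congr fun l => ?_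
  have hsqrt : √((4 : ℝ) ^ l) = 2 ^ l := by
    rw [show (4 : ℝ) ^ l = (2 ^ l) ^ 2 by rw [← pow_mul, mul_comm, pow_mul]; norm_num,
      Real.sqrt_sq (by positivity)]
  rw [Pi.div_apply, Real.sqrt_div' _ (by positivity), hsqrt, div_div_div_cancel_right₀ (by positivity)]

theorem stmt_12 (u : ℕ) (hu : 1 ≤ u ∧ u ≤ 4)
    (q : ℕ → ℕ) (hq : ∀ l, q l = u * 4 ^ l + ∑ i ∈ Finset.range l, 2 * 4 ^ i) :
    Filter.Tendsto (fun l : ℕ => (cnt A (q l) : ℝ) / Real.sqrt (q l))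
      Filter.atTop (nhds (((u : ℝ) + 4) / Real.sqrt ((u : ℝ) + 2 / 3))) := by
  have hq_zero : q 0 = u := by simp [hq]
  have hq_succ (l : ℕ) : q (l + 1) = 4 * q l + 2 := by
    rw [hq, hq, Finset.sum_range_succ', mul_add, Finset.mul_sum]
    simp only [pow_succ]
    ring_nf
  have hq_pos (l : ℕ) : 1 ≤ q l := by
    cases l with
    | zero => exact hq_zero ▸ hu.1
    | succ l => rw [hq_succ]; omega
  have hcnt (l : ℕ) : (cnt A (q l) : ℝ) = (u + 4) * 2 ^ l - 4 := by
    induction l with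
    | zero => simp [hq_zero, cnt_A_of_le_four hu.2]
    | succ l ih => rw [hq_succ, cnt_A_four_mul_add_two (hq_pos l)]; push_cast; rw [ih]; ring
  have hq_real (l : ℕ) : (q l : ℝ) = (u + 2 / 3) * 4 ^ l - 2 / 3 := by
    induction l with
    | zero => simp [hq_zero]
    | succ l ih => rw [hq_succ]; push_cast; rw [ih]; ring
  simp_rw [hcnt, hq_real]
  exact tendsto_mul_two_pow_div_sqrt_mul_four_pow (by positivity)
end
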